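/- Let R ≥ 2|b| and let X = H^∞(E_R) be the Banach space of bounded holomorphic functions on E_R = {z ∈ ℂ : Re z > 0, |z| > R} with the sup norm. Then the map T defined by (Th)(z) = 1 + ∫_{Γ_z} e^{2ξ} (∫_{Γ_ξ} (b e^{-2η}/η²) h(η) dη) dξ, where Γ_z = {tz : t ∈ [1,∞)}, is a well-defined contraction on X with Lipschitz constant |b|/R ≤ 1/2, and hence has a unique fixed point h₀ ∈ X satisfying ‖h₀ - 1‖_X ≤ 1. -/

import Mathlib

/-!
Exchanging the two ray integrals (Fubini on `1 ≤ t ≤ s`) and integrating `e^{2tz}` over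
`t ∈ [1, s]` gives `(T h)(z) = 1 + ∫₁^∞ K(z, s) h(sz) ds` with
`K(z, s) = b (1 - e^{2z(1-s)}) / (2 s² z)`. For `Re z > 0` the exponential has modulus at most `1`,
so `|K(z, s)| ≤ |b| / (|z| s²) ≤ |b| / (R s²)`, and `∫₁^∞ s⁻² ds = 1` makes `T` Lipschitz with
constant `|b|/R ≤ 1/2`. The same uniform bound on the integrand gives holomorphy of `T h` by
differentiation under the integral sign, the derivative being controlled by Cauchy's estimate.
Bounded holomorphic functions on the open set `E_R` form a closed subspace of the bounded continuous
functions (a uniform limit of holomorphic functions is holomorphic), so Banach's fixed point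
theorem applies, and `‖h₀ - 1‖ ≤ ‖T 1 - 1‖ / (1 - |b|/R) ≤ (|b|/R) / (1 - |b|/R) ≤ 1`.
-/

open MeasureTheory Set Metric Filter Topology Function Complex

section ParametricHolomorphy

variable {α : Type*} [MeasurableSpace α] {μ : Measure α} {E : Type*} [NormedAddCommGroup E]

theorem aestronglyMeasurable_deriv_of_eventually {𝕜 : Type*} [NontriviallyNormedField 𝕜]
    [NormedSpace 𝕜 E] {F : 𝕜 → α → E} {x₀ : 𝕜}
    (hF_meas : ∀ᶠ x in 𝓝 x₀, AEStronglyMeasurable (F x) μ)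
    (hF_diff : ∀ᵐ a ∂μ, DifferentiableAt 𝕜 (F · a) x₀) :
    AEStronglyMeasurable (fun a ↦ deriv (F · a) x₀) μ := by
  obtain ⟨x, hx⟩ := exists_seq_tendsto (𝓝[≠] x₀)
  obtain ⟨N, hN⟩ := eventually_atTop.1 <| (hx.mono_right nhdsWithin_le_nhds).eventually hF_meas
  have hxN : Tendsto (fun n ↦ x (n + N)) atTop (𝓝[≠] x₀) := hx.comp (tendsto_add_atTop_nat N)
  refine aestronglyMeasurable_of_tendsto_ae atTop
    (f := fun n a ↦ slope (F · a) x₀ (x (n + N))) (fun n ↦ ?_) ?_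
  · simp only [slope_def_module]
    exact ((hN _ (by omega)).sub hF_meas.self_of_nhds).const_smul _
  · filter_upwards [hF_diff] with a ha
    exact (hasDerivAt_iff_tendsto_slope.1 ha.hasDerivAt).comp hxN

theorem differentiableOn_integral_of_dominated [NormedSpace ℂ E] {U : Set ℂ} (hU : IsOpen U)
    {F : ℂ → α → E} {bound : α → ℝ} (hF_meas : ∀ z ∈ U, AEStronglyMeasurable (F z) μ)
    (hF_diff : ∀ᵐ a ∂μ, DifferentiableOn ℂ (F · a) U)
    (h_bound : ∀ᵐ a ∂μ, ∀ z ∈ U, ‖F z a‖ ≤ bound a) (bound_integrable : Integrable bound μ) :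
    DifferentiableOn ℂ (fun z ↦ ∫ a, F z a ∂μ) U := by
  intro z₀ hz₀
  obtain ⟨r, hr, hrU⟩ := Metric.isOpen_iff.1 hU z₀ hz₀
  have hball : ∀ z ∈ ball z₀ (r / 2), closedBall z (r / 2) ⊆ U := fun z hz w hw ↦ hrU <| by
    rw [mem_ball] at hz ⊢; rw [mem_closedBall] at hw; linarith [dist_triangle w z z₀]
  have hsub : ball z₀ (r / 2) ⊆ U := fun z hz ↦ hball z hz (mem_closedBall_self (by positivity))
  have hF_diffAt : ∀ᵐ a ∂μ, ∀ z ∈ ball z₀ (r / 2), DifferentiableAt ℂ (F · a) z := by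
    filter_upwards [hF_diff] with a ha z hz
    exact ha.differentiableAt (hU.mem_nhds (hsub hz))
  -- Cauchy's estimate turns the bound on `F` into one on its derivative.
  have h_deriv_bound : ∀ᵐ a ∂μ, ∀ z ∈ ball z₀ (r / 2), ‖deriv (F · a) z‖ ≤ bound a / (r / 2) := by
    filter_upwards [hF_diff, h_bound] with a hdiff hbd z hz
    refine Complex.norm_deriv_le_of_forall_mem_sphere_norm_le (by positivity)
      ((hdiff.mono (hball z hz)).diffContOnCl_ball le_rfl) fun w hw ↦ hbd w ?_
    exact hball z hz (sphere_subset_closedBall hw)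
  have hmeas : ∀ᶠ z in 𝓝 z₀, AEStronglyMeasurable (F z) μ :=
    eventually_of_mem (hU.mem_nhds hz₀) hF_meas
  refine (hasDerivAt_integral_of_dominated_loc_of_deriv_le (ball_mem_nhds z₀ (by positivity))
    hmeas ?_ (aestronglyMeasurable_deriv_of_eventually hmeas ?_) h_deriv_bound
    (bound_integrable.div_const _) ?_).2.differentiableAt.differentiableWithinAt
  · refine bound_integrable.mono' (hF_meas z₀ hz₀) ?_
    filter_upwards [h_bound] with a ha using ha z₀ hz₀
  · filter_upwards [hF_diffAt] with a ha using ha z₀ (mem_ball_self (by positivity))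
  · filter_upwards [hF_diffAt] with a ha z hz using (ha z hz).hasDerivAt

end ParametricHolomorphy

section Fubini

theorem setIntegral_Ici_indicator_Iic {E : Type*} [NormedAddCommGroup E] [NormedSpace ℝ E]
    {f : ℝ → E} {a s : ℝ} (has : a ≤ s) :
    ∫ t in Ici a, (Iic s).indicator f t = ∫ t in a..s, f t := by
  rw [integral_indicator measurableSet_Iic, Measure.restrict_restrict measurableSet_Iic,
    inter_comm, Ici_inter_Iic, integral_Icc_eq_integral_Ioc, intervalIntegral.integral_of_le has]

variable {𝕜 : Type*} [RCLike 𝕜]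

theorem integral_Ici_mul_integral_Ici {f g : ℝ → 𝕜} {a : ℝ} (hf : Continuous f)
    (hg : IntegrableOn g (Ici a))
    (hfg : IntegrableOn (fun s ↦ (∫ t in a..s, ‖f t‖) * ‖g s‖) (Ici a)) :
    ∫ t in Ici a, f t * ∫ s in Ici t, g s = ∫ s in Ici a, (∫ t in a..s, f t) * g s := by
  set φ : ℝ → ℝ → 𝕜 := fun t s ↦ if t ≤ s then f t * g s else 0
  have hφ_fst : ∀ t, (φ t ·) = (Ici t).indicator (fun s ↦ f t * g s) := by
    intro t; ext s; simp [φ, indicator]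
  have hφ_snd : ∀ s, (φ · s) = (Iic s).indicator (fun t ↦ f t * g s) := by
    intro s; ext t; simp [φ, indicator]
  have hφ_meas : AEStronglyMeasurable (uncurry φ)
      ((volume.restrict (Ici a)).prod (volume.restrict (Ici a))) := by
    have : uncurry φ = {p : ℝ × ℝ | p.1 ≤ p.2}.indicator (fun p ↦ f p.1 * g p.2) := by
      ext p; simp [φ, indicator, uncurry]
    rw [this]
    exact (hf.aestronglyMeasurable.comp_fst.mul hg.aestronglyMeasurable.comp_snd).indicator
      (measurableSet_le measurable_fst measurable_snd)
  have hφ_int : Integrable (uncurry φ)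
      ((volume.restrict (Ici a)).prod (volume.restrict (Ici a))) := by
    refine (integrable_prod_iff' hφ_meas).2 ⟨?_, hfg.congr ?_⟩
    all_goals refine (ae_restrict_iff' measurableSet_Ici).2 (ae_of_all _ fun s (hs : a ≤ s) ↦ ?_)
    · simp only [uncurry_apply_pair, hφ_snd]
      rw [integrable_indicator_iff measurableSet_Iic, IntegrableOn,
        Measure.restrict_restrict measurableSet_Iic, inter_comm, Ici_inter_Iic]
      exact (hf.mul continuous_const).integrableOn_Icc
    · have : (‖φ · s‖) = (Iic s).indicator (fun t ↦ ‖f t‖ * ‖g s‖) := by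
        ext t; by_cases h : t ≤ s <;> simp [φ, h]
      simp only [uncurry_apply_pair, this, setIntegral_Ici_indicator_Iic hs,
        intervalIntegral.integral_mul_const]
  calc ∫ t in Ici a, f t * ∫ s in Ici t, g s = ∫ t in Ici a, ∫ s in Ici a, φ t s := by
        refine setIntegral_congr_fun measurableSet_Ici fun t ht ↦ ?_
        rw [hφ_fst, integral_indicator measurableSet_Ici,
          Measure.restrict_restrict measurableSet_Ici, Ici_inter_Ici, max_eq_left ht,
          integral_const_mul]
    _ = ∫ s in Ici a, ∫ t in Ici a, φ t s := integral_integral_swap hφ_int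
    _ = ∫ s in Ici a, (∫ t in a..s, f t) * g s := by
        refine setIntegral_congr_fun measurableSet_Ici fun s hs ↦ ?_
        rw [hφ_snd, setIntegral_Ici_indicator_Iic hs, intervalIntegral.integral_mul_const]

end Fubini

namespace BoundedContinuousFunction

variable {E : Set ℂ}

def restrictOfBoundedOn (h : ℂ → ℂ) (hc : ContinuousOn h E) (hb : ∃ C, ∀ z ∈ E, ‖h z‖ ≤ C) :
    E →ᵇ ℂ where
  toFun := E.domRestrict h
  continuous_toFun := hc.domRestrict
  map_bounded' := by
    obtain ⟨C, hC⟩ := hb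
    exact ⟨2 * C, fun x y ↦ (dist_le_norm_add_norm _ _).trans <|
      (add_le_add (hC x x.2) (hC y y.2)).trans_eq (two_mul C).symm⟩

noncomputable def extendZero (f : E →ᵇ ℂ) : ℂ → ℂ := Function.extend Subtype.val f 0

theorem extendZero_of_mem (f : E →ᵇ ℂ) {z : ℂ} (hz : z ∈ E) : extendZero f z = f ⟨z, hz⟩ :=
  Subtype.val_injective.extend_apply _ _ (⟨z, hz⟩ : E)

theorem norm_extendZero_le (f : E →ᵇ ℂ) {z : ℂ} (hz : z ∈ E) : ‖extendZero f z‖ ≤ ‖f‖ := by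
  rw [extendZero_of_mem f hz]
  exact f.norm_coe_le_norm _

def holomorphic (E : Set ℂ) : Set (E →ᵇ ℂ) := {f | DifferentiableOn ℂ (extendZero f) E}

theorem isClosed_holomorphic (hE : IsOpen E) : IsClosed (holomorphic E) := by
  refine IsSeqClosed.isClosed fun f f₀ hf hlim ↦ ?_
  refine TendstoLocallyUniformlyOn.differentiableOn (φ := atTop) (F := fun n ↦ extendZero (f n))
    ?_ (Eventually.of_forall hf) hE
  refine TendstoUniformlyOn.tendstoLocallyUniformlyOn ?_
  rw [tendstoUniformlyOn_iff_tendstoUniformly_comp_coe]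
  simpa [comp_def, extendZero_of_mem] using tendsto_iff_tendstoUniformly.1 hlim

def holomorphicOfBoundedOn (h : ℂ → ℂ) (hd : DifferentiableOn ℂ h E)
    (hb : ∃ C, ∀ z ∈ E, ‖h z‖ ≤ C) : holomorphic E :=
  ⟨restrictOfBoundedOn h hd.continuousOn hb, hd.congr fun _ hz ↦ extendZero_of_mem _ hz⟩

@[simp]
theorem holomorphicOfBoundedOn_apply {h : ℂ → ℂ} (hd : DifferentiableOn ℂ h E)
    (hb : ∃ C, ∀ z ∈ E, ‖h z‖ ≤ C) (z : E) : (holomorphicOfBoundedOn h hd hb : E →ᵇ ℂ) z = h z :=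
  rfl

theorem extendZero_holomorphicOfBoundedOn {h : ℂ → ℂ} (hd : DifferentiableOn ℂ h E)
    (hb : ∃ C, ∀ z ∈ E, ‖h z‖ ≤ C) {z : ℂ} (hz : z ∈ E) :
    extendZero (holomorphicOfBoundedOn h hd hb : E →ᵇ ℂ) z = h z :=
  extendZero_of_mem _ hz

theorem norm_extendZero_sub_le (f g : E →ᵇ ℂ) {z : ℂ} (hz : z ∈ E) :
    ‖extendZero f z - extendZero g z‖ ≤ dist f g := by
  rw [extendZero_of_mem f hz, extendZero_of_mem g hz, ← dist_eq_norm]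
  exact dist_coe_le_dist _

end BoundedContinuousFunction

open BoundedContinuousFunction in
theorem exists_boundedHolomorphic_fixedPoint {E : Set ℂ} (hE : IsOpen E)
    {T : (ℂ → ℂ) → ℂ → ℂ} {q : ℝ} (hq0 : 0 ≤ q) (hq1 : q < 1)
    (hT : ∀ h : ℂ → ℂ, DifferentiableOn ℂ h E → (∃ C, ∀ z ∈ E, ‖h z‖ ≤ C) →
        DifferentiableOn ℂ (T h) E ∧ ∃ C, ∀ z ∈ E, ‖T h z‖ ≤ C)
    (hlip : ∀ h₁ h₂ : ℂ → ℂ, DifferentiableOn ℂ h₁ E → (∃ C, ∀ z ∈ E, ‖h₁ z‖ ≤ C) →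
        DifferentiableOn ℂ h₂ E → (∃ C, ∀ z ∈ E, ‖h₂ z‖ ≤ C) →
        ∀ C : ℝ, (∀ z ∈ E, ‖h₁ z - h₂ z‖ ≤ C) → ∀ z ∈ E, ‖T h₁ z - T h₂ z‖ ≤ q * C)
    {u : ℂ → ℂ} (hu : DifferentiableOn ℂ u E) (hub : ∃ C, ∀ z ∈ E, ‖u z‖ ≤ C) {δ : ℝ}
    (hδ0 : 0 ≤ δ) (hδ : ∀ z ∈ E, ‖T u z - u z‖ ≤ δ) :
    ∃ h₀ : ℂ → ℂ, DifferentiableOn ℂ h₀ E ∧ (∃ C, ∀ z ∈ E, ‖h₀ z‖ ≤ C) ∧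
      (∀ z ∈ E, T h₀ z = h₀ z) ∧ (∀ z ∈ E, ‖h₀ z - u z‖ ≤ δ / (1 - q)) ∧
      ∀ h₁ : ℂ → ℂ, DifferentiableOn ℂ h₁ E → (∃ C, ∀ z ∈ E, ‖h₁ z‖ ≤ C) →
        (∀ z ∈ E, T h₁ z = h₁ z) → ∀ z ∈ E, h₁ z = h₀ z := by
  have : CompleteSpace (holomorphic E) := (isClosed_holomorphic hE).completeSpace_coe
  have hbdd (f : holomorphic E) : ∃ C, ∀ z ∈ E, ‖extendZero (f : E →ᵇ ℂ) z‖ ≤ C :=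
    ⟨_, fun _ ↦ norm_extendZero_le _⟩
  -- the Lipschitz bound with `C = 0` says that `T h` on `E` only depends on `h` on `E`
  have hlocal {h} (hd : DifferentiableOn ℂ h E) (hb) {z} (hz : z ∈ E) :
      T (extendZero (holomorphicOfBoundedOn h hd hb : E →ᵇ ℂ)) z = T h z :=
    sub_eq_zero.1 <| norm_le_zero_iff.1 <| by
      simpa using hlip _ _ (holomorphicOfBoundedOn h hd hb).2 (hbdd _) hd hb 0
        (fun w hw ↦ by simp [extendZero_holomorphicOfBoundedOn hd hb hw]) z hz
  let Φ (f : holomorphic E) : holomorphic E :=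
    holomorphicOfBoundedOn _ (hT _ f.2 (hbdd f)).1 (hT _ f.2 (hbdd f)).2
  have hΦ : ContractingWith ⟨q, hq0⟩ Φ :=
    ⟨NNReal.coe_lt_coe.1 hq1, LipschitzWith.of_dist_le_mul fun f g ↦
      (dist_le (by positivity)).2 fun z ↦ (dist_eq_norm _ _).trans_le <|
        hlip _ _ f.2 (hbdd f) g.2 (hbdd g) _ (fun _ hw ↦ norm_extendZero_sub_le _ _ hw) z z.2⟩
  set v := holomorphicOfBoundedOn u hu hub
  have : Nonempty (holomorphic E) := ⟨v⟩
  set f₀ := hΦ.fixedPoint Φ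
  have hfix {z} (hz : z ∈ E) : T (extendZero (f₀ : E →ᵇ ℂ)) z = extendZero (f₀ : E →ᵇ ℂ) z :=
    (extendZero_holomorphicOfBoundedOn _ _ hz).symm.trans <|
      congrArg (fun f : holomorphic E ↦ extendZero (f : E →ᵇ ℂ) z) hΦ.fixedPoint_isFixedPt
  have hdist : dist v (Φ v) ≤ δ := (dist_le hδ0).2 fun w ↦ by
    rw [dist_comm, dist_eq_norm]
    simpa [v, Φ, hlocal hu hub w.2] using hδ w w.2
  refine ⟨extendZero (f₀ : E →ᵇ ℂ), f₀.2, hbdd f₀, fun z hz ↦ hfix hz, fun z hz ↦ ?_, ?_⟩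
  · calc ‖extendZero (f₀ : E →ᵇ ℂ) z - u z‖ ≤ dist f₀ v := by
          simpa [v, extendZero_holomorphicOfBoundedOn hu hub hz, Subtype.dist_eq] using
            norm_extendZero_sub_le (f₀ : E →ᵇ ℂ) v hz
      _ ≤ δ / (1 - q) := (dist_comm f₀ v ▸ hΦ.dist_fixedPoint_le v).trans <|
          div_le_div_of_nonneg_right hdist (sub_pos.2 hq1).le
  · intro h₁ hd₁ hb₁ hfix₁ z hz
    have : IsFixedPt Φ (holomorphicOfBoundedOn h₁ hd₁ hb₁) :=
      Subtype.ext <| BoundedContinuousFunction.ext fun w ↦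
        (hlocal hd₁ hb₁ w.2).trans (hfix₁ w w.2)
    rw [← extendZero_holomorphicOfBoundedOn hd₁ hb₁ hz, hΦ.fixedPoint_unique this]

theorem rpow_neg_two_eqOn : EqOn (fun s : ℝ ↦ s ^ (-2 : ℝ)) (fun s ↦ (s ^ 2)⁻¹) (Ioi 0) :=
  fun s (hs : 0 < s) ↦ by simp [Real.rpow_neg hs.le]

theorem integrableOn_Ici_inv_sq {a : ℝ} (ha : 0 < a) :
    IntegrableOn (fun s : ℝ ↦ (s ^ 2)⁻¹) (Ici a) := by
  rw [integrableOn_Ici_iff_integrableOn_Ioi]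
  exact (integrableOn_Ioi_rpow_of_lt (by norm_num) ha).congr_fun
    (rpow_neg_two_eqOn.mono (Ioi_subset_Ioi ha.le)) measurableSet_Ioi

theorem integral_Ici_inv_sq {a : ℝ} (ha : 0 < a) : ∫ s in Ici a, (s ^ 2)⁻¹ = a⁻¹ := by
  rw [integral_Ici_eq_integral_Ioi, ← setIntegral_congr_fun measurableSet_Ioi
    (rpow_neg_two_eqOn.mono (Ioi_subset_Ioi ha.le)), integral_Ioi_rpow_of_lt (by norm_num) ha]
  norm_num [Real.rpow_neg_one]

theorem integral_exp_mul_le {c : ℝ} (hc : 0 < c) (a b : ℝ) :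
    ∫ t in a..b, Real.exp (c * t) ≤ Real.exp (c * b) / c := by
  rw [intervalIntegral.integral_comp_mul_left (fun t ↦ Real.exp t) hc.ne', integral_exp,
    smul_eq_mul, inv_mul_eq_div]
  gcongr
  linarith [Real.exp_pos (c * a)]

def exteriorHalfPlane (R : ℝ) : Set ℂ := {z | 0 < z.re ∧ R < ‖z‖}

noncomputable def rayKernel (b : ℝ) (z : ℂ) (s : ℝ) : ℂ :=
  b / (2 * s ^ 2 * z) * (1 - exp (2 * z * (1 - s)))

noncomputable def rayIntegral (b : ℝ) (h : ℂ → ℂ) (z : ℂ) : ℂ :=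
  ∫ s in Ici (1 : ℝ), rayKernel b z s * h (s * z)

noncomputable def innerIntegrand (b : ℝ) (h : ℂ → ℂ) (z : ℂ) (s : ℝ) : ℂ :=
  (b * exp (-2 * s * z) / (s * z) ^ 2 * h (s * z)) * z

/-- The map `T` of the theorem. -/
noncomputable def rayOperator (b : ℝ) (h : ℂ → ℂ) (z : ℂ) : ℂ :=
  1 + ∫ t in Ici (1 : ℝ), (exp (2 * t * z) * ∫ s in Ici t, innerIntegrand b h z s) * z

section ExteriorHalfPlane

variable {b R C : ℝ} {h : ℂ → ℂ} {z : ℂ}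

theorem isOpen_exteriorHalfPlane (R : ℝ) : IsOpen (exteriorHalfPlane R) :=
  (isOpen_lt continuous_const continuous_re).inter (isOpen_lt continuous_const continuous_norm)

theorem ne_zero_of_mem_exteriorHalfPlane (hz : z ∈ exteriorHalfPlane R) : z ≠ 0 := by
  rintro rfl
  simpa using hz.1

theorem ofReal_mul_mem_exteriorHalfPlane (hz : z ∈ exteriorHalfPlane R) {s : ℝ} (hs : 1 ≤ s) :
    (s : ℂ) * z ∈ exteriorHalfPlane R := by
  refine ⟨by simpa using mul_pos (by linarith) hz.1, ?_⟩
  rw [norm_mul, norm_real, Real.norm_of_nonneg (by linarith)]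
  nlinarith [norm_nonneg z, hz.2]

theorem continuousOn_comp_ofReal_mul (hh : ContinuousOn h (exteriorHalfPlane R))
    (hz : z ∈ exteriorHalfPlane R) : ContinuousOn (fun s : ℝ ↦ h (s * z)) (Ici 1) :=
  hh.comp (by fun_prop) fun _ hs ↦ ofReal_mul_mem_exteriorHalfPlane hz hs

theorem norm_rayKernel_le (hz : 0 ≤ z.re) {s : ℝ} (hs : 1 ≤ s) :
    ‖rayKernel b z s‖ ≤ |b| / ‖z‖ * (s ^ 2)⁻¹ := by
  have hexp : ‖exp (2 * z * (1 - s))‖ ≤ 1 := by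
    rw [norm_exp, Real.exp_le_one_iff]
    simpa using mul_nonpos_of_nonneg_of_nonpos (mul_nonneg zero_le_two hz) (sub_nonpos.2 hs)
  calc ‖rayKernel b z s‖ ≤ |b| / (2 * s ^ 2 * ‖z‖) * 2 := by
        rw [rayKernel, norm_mul]
        gcongr
        · simp
        · exact (norm_sub_le _ _).trans (by rw [norm_one]; linarith)
    _ = |b| / ‖z‖ * (s ^ 2)⁻¹ := by ring

theorem norm_rayKernel_mul_le (hz : 0 ≤ z.re) {s : ℝ} (hs : 1 ≤ s) (hC : ‖h (s * z)‖ ≤ C) :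
    ‖rayKernel b z s * h (s * z)‖ ≤ |b| / ‖z‖ * C * (s ^ 2)⁻¹ := by
  rw [norm_mul, mul_right_comm]
  exact mul_le_mul (norm_rayKernel_le hz hs) hC (norm_nonneg _) (by positivity)

theorem aestronglyMeasurable_rayKernel_mul (hh : ContinuousOn h (exteriorHalfPlane R))
    (hz : z ∈ exteriorHalfPlane R) :
    AEStronglyMeasurable (fun s ↦ rayKernel b z s * h (s * z)) (volume.restrict (Ici 1)) :=
  (by unfold rayKernel; fun_prop : Measurable (rayKernel b z)).aestronglyMeasurable.mul
    ((continuousOn_comp_ofReal_mul hh hz).aestronglyMeasurable measurableSet_Ici)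

theorem integrableOn_rayKernel_mul (hh : ContinuousOn h (exteriorHalfPlane R))
    (hC : ∀ w ∈ exteriorHalfPlane R, ‖h w‖ ≤ C) (hz : z ∈ exteriorHalfPlane R) :
    IntegrableOn (fun s ↦ rayKernel b z s * h (s * z)) (Ici 1) :=
  ((integrableOn_Ici_inv_sq one_pos).const_mul _).mono' (aestronglyMeasurable_rayKernel_mul hh hz)
    ((ae_restrict_iff' measurableSet_Ici).2 <| ae_of_all _ fun _ hs ↦
      norm_rayKernel_mul_le hz.1.le hs (hC _ (ofReal_mul_mem_exteriorHalfPlane hz hs)))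

theorem norm_rayKernel_mul_le_of_mem (hR0 : 0 < R) (hC : ∀ w ∈ exteriorHalfPlane R, ‖h w‖ ≤ C)
    (hz : z ∈ exteriorHalfPlane R) {s : ℝ} (hs : 1 ≤ s) :
    ‖rayKernel b z s * h (s * z)‖ ≤ |b| / R * C * (s ^ 2)⁻¹ := by
  have hC0 : 0 ≤ C := (norm_nonneg _).trans (hC z hz)
  refine (norm_rayKernel_mul_le hz.1.le hs (hC _ (ofReal_mul_mem_exteriorHalfPlane hz hs))).trans ?_
  gcongr
  exact hz.2.le

theorem norm_rayIntegral_le (hR0 : 0 < R) (hC : ∀ w ∈ exteriorHalfPlane R, ‖h w‖ ≤ C)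
    (hz : z ∈ exteriorHalfPlane R) : ‖rayIntegral b h z‖ ≤ |b| / R * C := by
  have hbound : ∀ s ∈ Ici (1 : ℝ), ‖rayKernel b z s * h (s * z)‖ ≤ |b| / R * C * (s ^ 2)⁻¹ :=
    fun _ hs ↦ norm_rayKernel_mul_le_of_mem hR0 hC hz hs
  calc ‖rayIntegral b h z‖ ≤ ∫ s in Ici (1 : ℝ), |b| / R * C * (s ^ 2)⁻¹ :=
        norm_integral_le_of_norm_le ((integrableOn_Ici_inv_sq one_pos).const_mul _)
          ((ae_restrict_iff' measurableSet_Ici).2 (ae_of_all _ hbound))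
    _ = |b| / R * C := by rw [integral_const_mul, integral_Ici_inv_sq one_pos, inv_one, mul_one]

theorem rayIntegral_sub {h₁ h₂ : ℂ → ℂ} {C₁ C₂ : ℝ} (hh₁ : ContinuousOn h₁ (exteriorHalfPlane R))
    (hC₁ : ∀ w ∈ exteriorHalfPlane R, ‖h₁ w‖ ≤ C₁) (hh₂ : ContinuousOn h₂ (exteriorHalfPlane R))
    (hC₂ : ∀ w ∈ exteriorHalfPlane R, ‖h₂ w‖ ≤ C₂) (hz : z ∈ exteriorHalfPlane R) :
    rayIntegral b h₁ z - rayIntegral b h₂ z = rayIntegral b (fun w ↦ h₁ w - h₂ w) z := by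
  rw [rayIntegral, rayIntegral, ← integral_sub (integrableOn_rayKernel_mul hh₁ hC₁ hz)
    (integrableOn_rayKernel_mul hh₂ hC₂ hz)]
  simp_rw [rayIntegral, mul_sub]

theorem differentiableOn_rayIntegral (hR0 : 0 < R) (hh : DifferentiableOn ℂ h (exteriorHalfPlane R))
    (hC : ∀ w ∈ exteriorHalfPlane R, ‖h w‖ ≤ C) :
    DifferentiableOn ℂ (rayIntegral b h) (exteriorHalfPlane R) := by
  refine differentiableOn_integral_of_dominated (isOpen_exteriorHalfPlane R)
    (fun z hz ↦ aestronglyMeasurable_rayKernel_mul hh.continuousOn hz) ?_ ?_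
    ((integrableOn_Ici_inv_sq one_pos).const_mul (|b| / R * C))
  all_goals refine (ae_restrict_iff' measurableSet_Ici).2 (ae_of_all _ fun s (hs : 1 ≤ s) ↦ ?_)
  · intro z hz
    have hs0 : (s : ℂ) ≠ 0 := by exact_mod_cast (one_pos.trans_le hs).ne'
    have hz0 := ne_zero_of_mem_exteriorHalfPlane hz
    have hkernel : DifferentiableAt ℂ (rayKernel b · s) z := by
      unfold rayKernel; fun_prop (disch := simp [*])
    refine (hkernel.mul ?_).differentiableWithinAt
    exact (hh.differentiableAt ((isOpen_exteriorHalfPlane R).mem_nhds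
      (ofReal_mul_mem_exteriorHalfPlane hz hs))).comp z (by fun_prop)
  · exact fun z hz ↦ norm_rayKernel_mul_le_of_mem hR0 hC hz hs

theorem norm_innerIntegrand_le (hz : z ≠ 0) {s : ℝ} (hC : ‖h (s * z)‖ ≤ C) :
    ‖innerIntegrand b h z s‖ ≤ |b| * C / ‖z‖ * (Real.exp (-2 * z.re * s) * (s ^ 2)⁻¹) := by
  have hre : (-2 * s * z).re = -2 * z.re * s := by simp; ring
  have hz' : 0 < ‖z‖ := norm_pos_iff.2 hz
  simp only [innerIntegrand, norm_mul, norm_div, norm_pow, norm_real, norm_exp, hre,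
    Real.norm_eq_abs, mul_pow, sq_abs]
  calc |b| * Real.exp (-2 * z.re * s) / (s ^ 2 * ‖z‖ ^ 2) * ‖h (s * z)‖ * ‖z‖
      = |b| * ‖h (s * z)‖ / ‖z‖ * (Real.exp (-2 * z.re * s) * (s ^ 2)⁻¹) := by
        field_simp
    _ ≤ |b| * C / ‖z‖ * (Real.exp (-2 * z.re * s) * (s ^ 2)⁻¹) := by gcongr

theorem integral_exp_mul_mul_innerIntegrand (hz : z ≠ 0) {s : ℝ} (hs : s ≠ 0) :
    (∫ t in (1 : ℝ)..s, exp (2 * t * z)) * innerIntegrand b h z s * z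
      = rayKernel b z s * h (s * z) := by
  have h2z : 2 * z ≠ 0 := mul_ne_zero two_ne_zero hz
  have hs' : (s : ℂ) ≠ 0 := by exact_mod_cast hs
  have hcomm (t : ℝ) : exp (2 * t * z) = exp (2 * z * t) := by ring_nf
  simp_rw [hcomm]
  rw [integral_exp_mul_complex h2z, innerIntegrand, rayKernel, ofReal_one, mul_one]
  have h1 : exp (-2 * s * z) = (exp (2 * z * s))⁻¹ := by rw [← exp_neg]; ring_nf
  have h2 : exp (2 * z * (1 - s)) = exp (2 * z) / exp (2 * z * s) := by rw [← exp_sub]; ring_nf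
  rw [h1, h2]
  field_simp

theorem aestronglyMeasurable_innerIntegrand (hh : ContinuousOn h (exteriorHalfPlane R))
    (hz : z ∈ exteriorHalfPlane R) :
    AEStronglyMeasurable (innerIntegrand b h z) (volume.restrict (Ici 1)) :=
  (((by fun_prop : Measurable fun s : ℝ ↦ (b : ℂ) * exp (-2 * s * z) / (s * z) ^ 2)
    |>.aestronglyMeasurable).mul
      ((continuousOn_comp_ofReal_mul hh hz).aestronglyMeasurable measurableSet_Ici)).mul_const z

theorem integrableOn_innerIntegrand (hh : ContinuousOn h (exteriorHalfPlane R))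
    (hC : ∀ w ∈ exteriorHalfPlane R, ‖h w‖ ≤ C) (hz : z ∈ exteriorHalfPlane R) :
    IntegrableOn (innerIntegrand b h z) (Ici 1) := by
  have hC0 : 0 ≤ C := (norm_nonneg _).trans (hC z hz)
  refine ((integrableOn_Ici_inv_sq one_pos).const_mul (|b| * C / ‖z‖)).mono'
    (aestronglyMeasurable_innerIntegrand hh hz)
    ((ae_restrict_iff' measurableSet_Ici).2 (ae_of_all _ fun s (hs : 1 ≤ s) ↦ ?_))
  refine (norm_innerIntegrand_le (ne_zero_of_mem_exteriorHalfPlane hz)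
    (hC _ (ofReal_mul_mem_exteriorHalfPlane hz hs))).trans
    (mul_le_mul_of_nonneg_left ?_ (by positivity))
  refine mul_le_of_le_one_left (by positivity) (Real.exp_le_one_iff.2 ?_)
  nlinarith [hz.1]

theorem integrableOn_integral_norm_exp_mul_norm_innerIntegrand
    (hh : ContinuousOn h (exteriorHalfPlane R)) (hC : ∀ w ∈ exteriorHalfPlane R, ‖h w‖ ≤ C)
    (hz : z ∈ exteriorHalfPlane R) :
    IntegrableOn
      (fun s ↦ (∫ t in (1 : ℝ)..s, ‖exp (2 * t * z)‖) * ‖innerIntegrand b h z s‖) (Ici 1) := by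
  have hx : 0 < 2 * z.re := by linarith [hz.1]
  have hC0 : 0 ≤ C := (norm_nonneg _).trans (hC z hz)
  have hnorm_exp (t : ℝ) : ‖exp (2 * t * z)‖ = Real.exp (2 * z.re * t) := by
    rw [norm_exp]; simp; ring
  simp_rw [hnorm_exp]
  refine ((integrableOn_Ici_inv_sq one_pos).const_mul (|b| * C / ‖z‖ / (2 * z.re))).mono'
    (((intervalIntegral.continuous_primitive (fun _ _ ↦ (by fun_prop : Continuous
      fun t : ℝ ↦ Real.exp (2 * z.re * t)).intervalIntegrable _ _) 1).aestronglyMeasurable).mul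
        (aestronglyMeasurable_innerIntegrand hh hz).norm)
    ((ae_restrict_iff' measurableSet_Ici).2 (ae_of_all _ fun s (hs : 1 ≤ s) ↦ ?_))
  have hI0 : 0 ≤ ∫ t in (1 : ℝ)..s, Real.exp (2 * z.re * t) :=
    intervalIntegral.integral_nonneg hs fun _ _ ↦ (Real.exp_pos _).le
  rw [norm_mul, Real.norm_of_nonneg hI0, norm_norm]
  calc _ ≤ Real.exp (2 * z.re * s) / (2 * z.re) *
        (|b| * C / ‖z‖ * (Real.exp (-2 * z.re * s) * (s ^ 2)⁻¹)) :=
        mul_le_mul (integral_exp_mul_le hx 1 s) (norm_innerIntegrand_le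
          (ne_zero_of_mem_exteriorHalfPlane hz) (hC _ (ofReal_mul_mem_exteriorHalfPlane hz hs)))
          (norm_nonneg _) (by positivity)
    _ = |b| * C / ‖z‖ / (2 * z.re) * (s ^ 2)⁻¹ := by
        rw [show -2 * z.re * s = -(2 * z.re * s) by ring, Real.exp_neg]
        field_simp

theorem rayOperator_eq_one_add_rayIntegral (hh : ContinuousOn h (exteriorHalfPlane R))
    (hC : ∀ w ∈ exteriorHalfPlane R, ‖h w‖ ≤ C) (hz : z ∈ exteriorHalfPlane R) :
    rayOperator b h z = 1 + rayIntegral b h z := by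
  rw [rayOperator, integral_mul_const, integral_Ici_mul_integral_Ici (by fun_prop)
    (integrableOn_innerIntegrand hh hC hz)
    (integrableOn_integral_norm_exp_mul_norm_innerIntegrand hh hC hz), ← integral_mul_const]
  exact congrArg (1 + ·) <| setIntegral_congr_fun measurableSet_Ici fun s (hs : 1 ≤ s) ↦
    integral_exp_mul_mul_innerIntegrand (ne_zero_of_mem_exteriorHalfPlane hz)
      (one_pos.trans_le hs).ne'

theorem differentiableOn_rayOperator (hR0 : 0 < R)
    (hh : DifferentiableOn ℂ h (exteriorHalfPlane R)) (hC : ∀ w ∈ exteriorHalfPlane R, ‖h w‖ ≤ C) :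
    DifferentiableOn ℂ (rayOperator b h) (exteriorHalfPlane R) :=
  ((differentiableOn_const 1).add (differentiableOn_rayIntegral hR0 hh hC)).congr fun _ hz ↦
    rayOperator_eq_one_add_rayIntegral hh.continuousOn hC hz

theorem norm_rayOperator_le (hR0 : 0 < R) (hh : ContinuousOn h (exteriorHalfPlane R))
    (hC : ∀ w ∈ exteriorHalfPlane R, ‖h w‖ ≤ C) (hz : z ∈ exteriorHalfPlane R) :
    ‖rayOperator b h z‖ ≤ 1 + |b| / R * C := by
  rw [rayOperator_eq_one_add_rayIntegral hh hC hz]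
  exact (norm_add_le _ _).trans (by simpa using norm_rayIntegral_le hR0 hC hz)

theorem norm_rayOperator_sub_le (hR0 : 0 < R) {h₁ h₂ : ℂ → ℂ} {C₁ C₂ : ℝ}
    (hh₁ : ContinuousOn h₁ (exteriorHalfPlane R)) (hC₁ : ∀ w ∈ exteriorHalfPlane R, ‖h₁ w‖ ≤ C₁)
    (hh₂ : ContinuousOn h₂ (exteriorHalfPlane R)) (hC₂ : ∀ w ∈ exteriorHalfPlane R, ‖h₂ w‖ ≤ C₂)
    (hC : ∀ w ∈ exteriorHalfPlane R, ‖h₁ w - h₂ w‖ ≤ C) (hz : z ∈ exteriorHalfPlane R) :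
    ‖rayOperator b h₁ z - rayOperator b h₂ z‖ ≤ |b| / R * C := by
  rw [rayOperator_eq_one_add_rayIntegral hh₁ hC₁ hz, rayOperator_eq_one_add_rayIntegral hh₂ hC₂ hz,
    add_sub_add_left_eq_sub, rayIntegral_sub hh₁ hC₁ hh₂ hC₂ hz]
  exact norm_rayIntegral_le hR0 hC hz

end ExteriorHalfPlane

/-- The fixed-point map `T` on the space of bounded holomorphic functions on
`E_R = {Re z > 0, |z| > R}` (with `R ≥ 2|b|`) given by
`(Th)(z) = 1 + ∫_{Γ_z} e^{2ξ} (∫_{Γ_ξ} b e^{-2η} η⁻² h(η) dη) dξ`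
(rays parametrized by `ξ = tz`, `η = sz`) is well defined, is a contraction with
Lipschitz constant `|b|/R ≤ 1/2`, and has a unique fixed point `h₀` with `‖h₀ - 1‖ ≤ 1`. -/
theorem stmt3 (b : ℝ) (R : ℝ) (hR0 : 0 < R) (hR : 2 * |b| ≤ R) :
    let E : Set ℂ := {z | 0 < z.re ∧ R < ‖z‖}
    let T : (ℂ → ℂ) → (ℂ → ℂ) := fun h z =>
      1 + ∫ t in Set.Ici (1:ℝ), (Complex.exp (2*t*z) *
            (∫ s in Set.Ici t,
              ((b : ℂ) * Complex.exp (-2*s*z) / (s*z)^2 * h (s*z)) * z)) * z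
    -- `T` maps bounded holomorphic functions on `E` to bounded holomorphic functions on `E`
    (∀ h : ℂ → ℂ, DifferentiableOn ℂ h E → (∃ C, ∀ z ∈ E, ‖h z‖ ≤ C) →
        DifferentiableOn ℂ (T h) E ∧ ∃ C, ∀ z ∈ E, ‖T h z‖ ≤ C) ∧
    -- `T` is Lipschitz with constant `|b|/R`
    (∀ h₁ h₂ : ℂ → ℂ, DifferentiableOn ℂ h₁ E → (∃ C, ∀ z ∈ E, ‖h₁ z‖ ≤ C) →
        DifferentiableOn ℂ h₂ E → (∃ C, ∀ z ∈ E, ‖h₂ z‖ ≤ C) →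
        ∀ C : ℝ, (∀ z ∈ E, ‖h₁ z - h₂ z‖ ≤ C) →
        ∀ z ∈ E, ‖T h₁ z - T h₂ z‖ ≤ (|b| / R) * C) ∧
    |b| / R ≤ 1/2 ∧
    -- existence and uniqueness of the fixed point, with `‖h₀ - 1‖ ≤ 1`
    (∃ h₀ : ℂ → ℂ, DifferentiableOn ℂ h₀ E ∧ (∃ C, ∀ z ∈ E, ‖h₀ z‖ ≤ C) ∧
      (∀ z ∈ E, T h₀ z = h₀ z) ∧ (∀ z ∈ E, ‖h₀ z - 1‖ ≤ 1) ∧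
      ∀ h₁ : ℂ → ℂ, DifferentiableOn ℂ h₁ E → (∃ C, ∀ z ∈ E, ‖h₁ z‖ ≤ C) →
        (∀ z ∈ E, T h₁ z = h₁ z) → ∀ z ∈ E, h₁ z = h₀ z) := by
  intro E T
  have hmaps : ∀ h : ℂ → ℂ, DifferentiableOn ℂ h E → (∃ C, ∀ z ∈ E, ‖h z‖ ≤ C) →
      DifferentiableOn ℂ (T h) E ∧ ∃ C, ∀ z ∈ E, ‖T h z‖ ≤ C := fun h hd ⟨_, hC⟩ ↦
    ⟨differentiableOn_rayOperator hR0 hd hC, _, fun _ hz ↦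
      norm_rayOperator_le hR0 hd.continuousOn hC hz⟩
  have hlip : ∀ h₁ h₂ : ℂ → ℂ, DifferentiableOn ℂ h₁ E → (∃ C, ∀ z ∈ E, ‖h₁ z‖ ≤ C) →
      DifferentiableOn ℂ h₂ E → (∃ C, ∀ z ∈ E, ‖h₂ z‖ ≤ C) →
      ∀ C : ℝ, (∀ z ∈ E, ‖h₁ z - h₂ z‖ ≤ C) → ∀ z ∈ E, ‖T h₁ z - T h₂ z‖ ≤ (|b| / R) * C :=
    fun _ _ hd₁ ⟨_, hC₁⟩ hd₂ ⟨_, hC₂⟩ _ hC _ hz ↦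
      norm_rayOperator_sub_le hR0 hd₁.continuousOn hC₁ hd₂.continuousOn hC₂ hC hz
  have hq : |b| / R ≤ 1 / 2 := by
    rw [div_le_iff₀ hR0]
    linarith
  have hT1 : ∀ z ∈ E, ‖T (fun _ ↦ 1) z - 1‖ ≤ |b| / R := fun z hz ↦ by
    have hT0 : T (fun _ ↦ 0) z = 1 := by simp [T]
    simpa [hT0] using hlip _ _ (differentiableOn_const 1) ⟨1, by simp⟩
      (differentiableOn_const 0) ⟨0, by simp⟩ 1 (by simp) z hz
  obtain ⟨h₀, hd₀, hb₀, hfix₀, hnear₀, huniq₀⟩ := exists_boundedHolomorphic_fixedPoint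
    (isOpen_exteriorHalfPlane R) (by positivity) (by linarith) hmaps hlip
    (differentiableOn_const 1) ⟨1, by simp⟩ (by positivity) hT1
  refine ⟨hmaps, hlip, hq, h₀, hd₀, hb₀, hfix₀, fun z hz ↦ (hnear₀ z hz).trans ?_, huniq₀⟩
  rw [div_le_one (by linarith)]
  linarith
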